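/- With the binning layer a_i(x) = ReLU(h(x) − c_i) with strictly increasing cutoffs c_1 < … < c_k, suppose a batch {x_1, …, x_B} is processed and exactly one input x_t satisfies c_i < h(x_t) ≤ c_{i+1} (i.e., x_t is the unique input in bin i), while h(x_s) ∉ (c_i, c_{i+1}] for every s ≠ t. Then the difference of accumulated weight gradients between neurons i and i+1 is proportional to x_t: (∑_s ∂L_s/∂a_i·x_s − ∑_s ∂L_s/∂a_{i+1}·x_s) = (∂L_t/∂y)·x_t, where the per-sample derivative through ReLU is ∂L_s/∂a_i = (∂L_s/∂y)·1[h(x_s) > c_i]. Hence x_t is recovered by dividing this weight-gradient difference by the corresponding bias-gradient difference, provided the bias-gradient difference is nonzero. -/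
import Mathlib


open Finset

lemma bin_diff_sum {B : ℕ} {M : Type*} [AddCommGroup M]
    (P Q : Fin B → Prop) [DecidablePred P] [DecidablePred Q]
    (f : Fin B → M) (t : Fin B)
    (hPt : P t) (hQt : ¬ Q t)
    (ho : ∀ s, s ≠ t → (P s ↔ Q s)) :
    (∑ s, (if P s then f s else 0)) - (∑ s, (if Q s then f s else 0)) = f t := by
  rw [← Finset.sum_sub_distrib]
  rw [Finset.sum_eq_single t]
  · simp [hPt, hQt]
  · intro s _ hs
    by_cases hp : P s
    · simp [hp, (ho s hs).mp hp]
    · exact by simp [hp]; exact fun hq => absurd ((ho s hs).mpr hq) hp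
  · simp

theorem robbing_the_fed_reconstruction
    (m k B : ℕ) (h : (Fin m → ℝ) → ℝ) (hlin : IsLinearMap ℝ h)
    (c : Fin k → ℝ) (hc : StrictMono c)
    (x : Fin B → (Fin m → ℝ)) (d : Fin B → ℝ) (t : Fin B)
    (i : Fin k) (hi : (i : ℕ) + 1 < k)
    (hlow : c i < h (x t)) (hhigh : h (x t) ≤ c ⟨(i : ℕ) + 1, hi⟩)
    (hothers : ∀ s, s ≠ t → ¬(c i < h (x s) ∧ h (x s) ≤ c ⟨(i : ℕ) + 1, hi⟩)) :
    (∑ s, (if c i < h (x s) then d s • x s else 0)) -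
      (∑ s, (if c ⟨(i : ℕ) + 1, hi⟩ < h (x s) then d s • x s else 0)) = d t • x t ∧
    ((∑ s, (if c i < h (x s) then d s else 0)) -
        (∑ s, (if c ⟨(i : ℕ) + 1, hi⟩ < h (x s) then d s else 0)) ≠ 0 →
      x t = ((∑ s, (if c i < h (x s) then d s else 0)) -
          (∑ s, (if c ⟨(i : ℕ) + 1, hi⟩ < h (x s) then d s else 0)))⁻¹ •
        ((∑ s, (if c i < h (x s) then d s • x s else 0)) -
          (∑ s, (if c ⟨(i : ℕ) + 1, hi⟩ < h (x s) then d s • x s else 0)))) := by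
  have hcc : c i < c ⟨(i : ℕ) + 1, hi⟩ := hc (by simp [Fin.lt_def])
  have ho : ∀ s, s ≠ t → ((c i < h (x s)) ↔ (c ⟨(i : ℕ) + 1, hi⟩ < h (x s))) := by
    intro s hs
    constructor
    · intro h1
      by_contra h2
      exact hothers s hs ⟨h1, le_of_not_gt h2⟩
    · intro h2
      exact hcc.trans h2
  have h1 := bin_diff_sum (fun s => c i < h (x s)) (fun s => c ⟨(i : ℕ) + 1, hi⟩ < h (x s))
    (fun s => d s • x s) t hlow (not_lt_of_ge hhigh) ho
  have h2 := bin_diff_sum (fun s => c i < h (x s)) (fun s => c ⟨(i : ℕ) + 1, hi⟩ < h (x s))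
    (fun s => d s) t hlow (not_lt_of_ge hhigh) ho
  refine ⟨h1, fun hne => ?_⟩
  rw [h1, h2]
  rw [h2] at hne
  rw [smul_smul, inv_mul_cancel₀ hne, one_smul]
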